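/- Every brick is matching covered: if G is a brick, then every edge of G lies in some perfect matching of G. -/

import Mathlib

/-- A graph is 3-connected if it has more than 3 vertices and deleting any set of fewer
than 3 vertices leaves a connected graph. -/
def ThreeConnected {V : Type*} [Fintype V] (G : SimpleGraph V) : Prop :=
  3 < Fintype.card V ∧ ∀ S : Set V, S.ncard < 3 → (G.induce Sᶜ).Connected

/-- A brick: a 3-connected graph such that deleting any two distinct vertices leaves
a graph with a perfect matching. -/
def IsBrick {V : Type*} [Fintype V] (G : SimpleGraph V) : Prop :=
  ThreeConnected G ∧ ∀ u v : V, u ≠ v →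
    ∃ M : (G.induce ({u, v} : Set V)ᶜ).Subgraph, M.IsPerfectMatching

/-- A connected graph with at least one edge is matching covered if every edge
lies in some perfect matching. -/
def MatchingCovered {V : Type*} (G : SimpleGraph V) : Prop :=
  G.Connected ∧ G.edgeSet.Nonempty ∧
    ∀ e ∈ G.edgeSet, ∃ M : G.Subgraph, M.IsPerfectMatching ∧ e ∈ M.edgeSet

namespace SimpleGraph

variable {V : Type*} {G : SimpleGraph V}

lemma edgeSet_nonempty_of_connected [Nontrivial V] (hG : G.Connected) : G.edgeSet.Nonempty :=
  edgeSet_nonempty.mpr fun hbot => not_connected_bot (hbot ▸ hG)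

lemma exists_isPerfectMatching_mem_edgeSet_of_induce_compl {u v : V} (huv : G.Adj u v)
    {M : (G.induce ({u, v} : Set V)ᶜ).Subgraph} (hM : M.IsPerfectMatching) :
    ∃ M' : G.Subgraph, M'.IsPerfectMatching ∧ s(u, v) ∈ M'.edgeSet := by
  set ι := Embedding.induce (G := G) ({u, v} : Set V)ᶜ
  have hmap : (M.map ι.toHom).IsMatching := hM.1.map ι.toHom ι.injective
  have hmap_verts : (M.map ι.toHom).verts = ({u, v} : Set V)ᶜ := by
    simp only [Subgraph.map_verts, hM.2.verts_eq_univ, Set.image_univ]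
    exact Subtype.range_coe
  have hdisj : Disjoint (M.map ι.toHom).support (G.subgraphOfAdj huv).support := by
    rw [hmap.support_eq_verts, (Subgraph.IsMatching.subgraphOfAdj huv).support_eq_verts,
      hmap_verts, subgraphOfAdj_verts]
    exact disjoint_compl_left
  refine ⟨M.map ι.toHom ⊔ G.subgraphOfAdj huv,
    ⟨hmap.sup (Subgraph.IsMatching.subgraphOfAdj huv) hdisj, ?_⟩, ?_⟩
  · rw [Subgraph.isSpanning_iff, Subgraph.verts_sup, hmap_verts, subgraphOfAdj_verts,
      Set.compl_union_self]
  · simp [Subgraph.edgeSet_sup, edgeSet_subgraphOfAdj]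

end SimpleGraph

open SimpleGraph

section

variable {V : Type*} [Fintype V] {G : SimpleGraph V}

lemma ThreeConnected.connected (hG : ThreeConnected G) : G.Connected := by
  have h := hG.2 ∅ (by simp)
  rw [Set.compl_empty] at h
  exact (induceUnivIso G).connected_iff.mp h

lemma ThreeConnected.nontrivial (hG : ThreeConnected G) : Nontrivial V :=
  Fintype.one_lt_card_iff_nontrivial.mp (by linarith [hG.1])

end

/-- Every brick is matching covered. -/
theorem brick_matchingCovered {V : Type*} [Fintype V] (G : SimpleGraph V)
    (hG : IsBrick G) : MatchingCovered G := by
  obtain ⟨h3, hpm⟩ := hG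
  have := h3.nontrivial
  refine ⟨h3.connected, edgeSet_nonempty_of_connected h3.connected, ?_⟩
  rintro ⟨u, v⟩ huv
  obtain ⟨M, hM⟩ := hpm u v (G.ne_of_adj huv)
  exact exists_isPerfectMatching_mem_edgeSet_of_induce_compl huv hM
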